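/- Let θ be an automorphism of a finite generalised quadrangle of order (s,t) whose order is a prime x with x > s+1 and x > t+1. Then x divides the number of points (s+1)(st+1). -/

import Mathlib

/-- A (finite) generalised quadrangle of order `(s, t)`: every line is incident
with exactly `s + 1` points, every point is incident with exactly `t + 1` lines,
any two distinct points lie on at most one common line, and for every
non-incident point-line pair `(p, l)` there is a unique point on `l`
collinear with `p`. -/
structure GenQuadrangle (P L : Type*) (s t : ℕ) where
  inc : P → L → Prop
  pts_per_line : ∀ l : L, Nat.card {p : P // inc p l} = s + 1
  lines_per_pt : ∀ p : P, Nat.card {l : L // inc p l} = t + 1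
  unique_line : ∀ ⦃p q : P⦄ ⦃l m : L⦄, p ≠ q →
      inc p l → inc q l → inc p m → inc q m → l = m
  gq_axiom : ∀ (p : P) (l : L), ¬ inc p l →
      ∃! q : P, inc q l ∧ ∃ m : L, inc p m ∧ inc q m

/-- Two points are collinear if they are distinct and lie on a common line. -/
def GenQuadrangle.Collinear {P L : Type*} {s t : ℕ} (Q : GenQuadrangle P L s t)
    (p q : P) : Prop :=
  p ≠ q ∧ ∃ l : L, Q.inc p l ∧ Q.inc q l

/-- An automorphism of a generalised quadrangle: a pair of permutations of the
points and of the lines which together preserve incidence. -/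
structure GenQuadrangle.Auto {P L : Type*} {s t : ℕ} (Q : GenQuadrangle P L s t) where
  permP : Equiv.Perm P
  permL : Equiv.Perm L
  pres : ∀ (p : P) (l : L), Q.inc p l ↔ Q.inc (permP p) (permL l)


/-!
The stabiliser of a point or a line is small: a line pencil has `t + 1 < x` lines and a line
has `s + 1 < x` points, so `θ`, whose `x`-th power is trivial, fixes every line through a fixed
point and every point on a fixed line. Since any point is joined to a fixed line by a line,
a single fixed point forces `θ = 1`, which has order `1 ≠ x`. Hence `⟨θ⟩` acts freely on the
points and `x` divides their number `(s + 1)(st + 1)`.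
-/

open Function Set in
theorem Equiv.Perm.apply_eq_self_of_mapsTo_of_ncard_lt {α : Type*} {σ : Equiv.Perm α} {x : ℕ}
    (hx : x.Prime) (hσ : σ ^ x = 1) {T : Set α} (hT : MapsTo σ T T) (hTfin : T.Finite)
    (hcard : T.ncard < x) {a : α} (ha : a ∈ T) : σ a = a := by
  classical
  have hper : IsPeriodicPt σ x a := by
    rw [IsPeriodicPt, IsFixedPt, ← Equiv.Perm.coe_pow, hσ, Equiv.Perm.coe_one, id]
  rcases hx.eq_one_or_self_of_dvd _ hper.minimalPeriod_dvd with h | h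
  · exact minimalPeriod_eq_one_iff_isFixedPt.mp h
  · have horbit : ((Finset.range x).image (σ^[·] a) : Set α) ⊆ T := by
      simp only [Finset.coe_image, Finset.coe_range]
      rintro _ ⟨k, -, rfl⟩
      exact hT.iterate k ha
    have hinj : (Finset.range x : Set ℕ).InjOn (σ^[·] a) := by
      rw [Finset.coe_range, ← h]
      exact iterate_injOn_Iio_minimalPeriod
    have := ncard_le_ncard horbit hTfin
    rw [ncard_coe_finset, Finset.card_image_of_injOn hinj, Finset.card_range] at this
    omega

namespace GenQuadrangle

variable {P L : Type*} {s t : ℕ} (Q : GenQuadrangle P L s t)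

theorem ncard_lines_inc (p : P) : {l | Q.inc p l}.ncard = t + 1 := by
  rw [← Nat.card_coe_set_eq]
  exact Q.lines_per_pt p

theorem ncard_points_inc (l : L) : {p | Q.inc p l}.ncard = s + 1 := by
  rw [← Nat.card_coe_set_eq]
  exact Q.pts_per_line l

theorem exists_inc_line (p : P) : ∃ l, Q.inc p l :=
  Set.nonempty_of_ncard_ne_zero (s := {l | Q.inc p l}) (by rw [Q.ncard_lines_inc p]; omega)

theorem exists_inc_point (l : L) : ∃ p, Q.inc p l :=
  Set.nonempty_of_ncard_ne_zero (s := {p | Q.inc p l}) (by rw [Q.ncard_points_inc l]; omega)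

section Counting

open Finset

def pointsOn [Fintype P] [DecidableRel Q.inc] (l : L) : Finset P := {p | Q.inc p l}

def linesThrough [Fintype L] [DecidableRel Q.inc] (p : P) : Finset L := {l | Q.inc p l}

@[simp]
theorem mem_pointsOn [Fintype P] [DecidableRel Q.inc] {p : P} {l : L} :
    p ∈ Q.pointsOn l ↔ Q.inc p l := by
  simp [pointsOn]

@[simp]
theorem mem_linesThrough [Fintype L] [DecidableRel Q.inc] {p : P} {l : L} :
    l ∈ Q.linesThrough p ↔ Q.inc p l := by
  simp [linesThrough]

theorem card_pointsOn [Fintype P] [DecidableRel Q.inc] (l : L) : #(Q.pointsOn l) = s + 1 := by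
  rw [← Q.pts_per_line l, Nat.card_eq_fintype_card, Fintype.card_subtype, pointsOn]

theorem card_linesThrough [Fintype L] [DecidableRel Q.inc] (p : P) :
    #(Q.linesThrough p) = t + 1 := by
  rw [← Q.lines_per_pt p, Nat.card_eq_fintype_card, Fintype.card_subtype, linesThrough]

def projFiber [Fintype P] [Fintype L] [DecidableEq P] [DecidableEq L] [DecidableRel Q.inc]
    (l : L) (r : P) : Finset P :=
  ((Q.linesThrough r).erase l).biUnion fun m => (Q.pointsOn m).erase r

theorem mem_projFiber [Fintype P] [Fintype L] [DecidableEq P] [DecidableEq L]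
    [DecidableRel Q.inc] {l : L} {r q : P} (hr : Q.inc r l) :
    q ∈ Q.projFiber l r ↔ ¬ Q.inc q l ∧ ∃ m, Q.inc r m ∧ Q.inc q m := by
  simp only [projFiber, mem_biUnion, mem_erase, mem_linesThrough, mem_pointsOn]
  constructor
  · rintro ⟨m, ⟨hml, hrm⟩, hqr, hqm⟩
    exact ⟨fun hql => hml (Q.unique_line hqr hqm hrm hql hr), m, hrm, hqm⟩
  · rintro ⟨hql, m, hrm, hqm⟩
    exact ⟨m, ⟨fun h => hql (h ▸ hqm), hrm⟩, fun h => hql (h ▸ hr), hqm⟩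

theorem card_projFiber [Fintype P] [Fintype L] [DecidableEq P] [DecidableEq L]
    [DecidableRel Q.inc] {l : L} {r : P} (hr : Q.inc r l) : #(Q.projFiber l r) = t * s := by
  have hdisj : ((Q.linesThrough r).erase l : Set L).PairwiseDisjoint
      fun m => (Q.pointsOn m).erase r := by
    intro m hm m' hm' hne
    simp only [coe_erase, Set.mem_sdiff, mem_coe, mem_linesThrough] at hm hm'
    rw [Function.onFun, disjoint_left]
    intro q hq hq'
    simp only [mem_erase, mem_pointsOn] at hq hq'
    exact hne (Q.unique_line hq.1 hq.2 hm.1 hq'.2 hm'.1)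
  have hcard : ∀ m ∈ (Q.linesThrough r).erase l, #((Q.pointsOn m).erase r) = s := fun m hm => by
    rw [card_erase_of_mem ((Q.mem_pointsOn).2 ((Q.mem_linesThrough).1 (mem_of_mem_erase hm))),
      card_pointsOn, Nat.add_sub_cancel]
  rw [projFiber, card_biUnion hdisj, sum_congr rfl hcard, sum_const, smul_eq_mul,
    card_erase_of_mem ((Q.mem_linesThrough).2 hr), card_linesThrough, Nat.add_sub_cancel]

/-- The points off `l` are partitioned according to their projection onto `l`, and the fibre
over `r` consists of `s` further points on each of the `t` other lines through `r`. -/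
theorem card_points (Q : GenQuadrangle P L s t) [Finite P] [Finite L] [Nonempty L] :
    Nat.card P = (s + 1) * (s * t + 1) := by
  classical
  have := Fintype.ofFinite P
  have := Fintype.ofFinite L
  obtain ⟨l⟩ := ‹Nonempty L›
  have hoff : ({q | ¬ Q.inc q l} : Finset P) = (Q.pointsOn l).biUnion (Q.projFiber l) := by
    ext q
    simp only [mem_filter, mem_univ, true_and, mem_biUnion, mem_pointsOn]
    constructor
    · intro hq
      obtain ⟨r, ⟨hr, m, hqm, hrm⟩, -⟩ := Q.gq_axiom q l hq
      exact ⟨r, hr, (Q.mem_projFiber hr).2 ⟨hq, m, hrm, hqm⟩⟩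
    · rintro ⟨r, hr, hq⟩
      exact ((Q.mem_projFiber hr).1 hq).1
  have hdisj : (Q.pointsOn l : Set P).PairwiseDisjoint (Q.projFiber l) := by
    intro r hr r' hr' hne
    rw [mem_coe, mem_pointsOn] at hr hr'
    rw [Function.onFun, disjoint_left]
    intro q hq hq'
    obtain ⟨hql, m, hrm, hqm⟩ := (Q.mem_projFiber hr).1 hq
    obtain ⟨-, m', hrm', hqm'⟩ := (Q.mem_projFiber hr').1 hq'
    exact hne ((Q.gq_axiom q l hql).unique ⟨hr, m, hqm, hrm⟩ ⟨hr', m', hqm', hrm'⟩)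
  have hfiber : ∀ r ∈ Q.pointsOn l, #(Q.projFiber l r) = t * s := fun r hr =>
    Q.card_projFiber ((Q.mem_pointsOn).1 hr)
  calc Nat.card P = #(Q.pointsOn l) + #({q | ¬ Q.inc q l} : Finset P) := by
        rw [Nat.card_eq_fintype_card, ← card_univ,
          ← card_filter_add_card_filter_not (Q.inc · l)]
        rfl
    _ = (s + 1) + (s + 1) * (t * s) := by
        rw [hoff, card_biUnion hdisj, sum_congr rfl hfiber, sum_const, card_pointsOn, smul_eq_mul]
    _ = (s + 1) * (s * t + 1) := by ring

end Counting

namespace Auto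

variable {Q} (θ : Q.Auto) {x : ℕ}

theorem nonempty_lines (hθ : (θ.permP, θ.permL) ≠ 1) : Nonempty L := by
  by_contra hL
  rw [not_nonempty_iff] at hL
  have : IsEmpty P := ⟨fun p => (Q.exists_inc_line p).elim fun l _ => isEmptyElim l⟩
  exact hθ (Subsingleton.elim _ _)

theorem permL_apply_eq_of_permP_apply_eq (hx : x.Prime) (hL : θ.permL ^ x = 1)
    (hxt : t + 1 < x) {p : P} (hp : θ.permP p = p) {l : L} (hl : Q.inc p l) :
    θ.permL l = l := by
  have hcard := Q.ncard_lines_inc p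
  refine Equiv.Perm.apply_eq_self_of_mapsTo_of_ncard_lt hx hL (T := {m | Q.inc p m})
    (fun m hm => ?_) (Set.finite_of_ncard_ne_zero (by omega)) (by omega) hl
  simpa [hp] using (θ.pres p m).mp hm

theorem permP_apply_eq_of_permL_apply_eq (hx : x.Prime) (hP : θ.permP ^ x = 1)
    (hxs : s + 1 < x) {l : L} (hl : θ.permL l = l) {p : P} (hp : Q.inc p l) :
    θ.permP p = p := by
  have hcard := Q.ncard_points_inc l
  refine Equiv.Perm.apply_eq_self_of_mapsTo_of_ncard_lt hx hP (T := {q | Q.inc q l})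
    (fun q hq => ?_) (Set.finite_of_ncard_ne_zero (by omega)) (by omega) hp
  simpa [hl] using (θ.pres q l).mp hq

theorem eq_one_of_permP_apply_eq (hx : x.Prime) (hP : θ.permP ^ x = 1)
    (hL : θ.permL ^ x = 1) (hxs : s + 1 < x) (hxt : t + 1 < x) {p : P} (hp : θ.permP p = p) :
    (θ.permP, θ.permL) = 1 := by
  have fixL {p l} : θ.permP p = p → Q.inc p l → θ.permL l = l :=
    (θ.permL_apply_eq_of_permP_apply_eq hx hL hxt · ·)
  have fixP {l p} : θ.permL l = l → Q.inc p l → θ.permP p = p :=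
    (θ.permP_apply_eq_of_permL_apply_eq hx hP hxs · ·)
  obtain ⟨l₀, hl₀⟩ := Q.exists_inc_line p
  have hl₀fix := fixL hp hl₀
  have hP1 : θ.permP = 1 := Equiv.ext fun q => by
    by_cases hq : Q.inc q l₀
    · exact fixP hl₀fix hq
    · obtain ⟨r, ⟨hr, m, hqm, hrm⟩, -⟩ := Q.gq_axiom q l₀ hq
      exact fixP (fixL (fixP hl₀fix hr) hrm) hqm
  have hL1 : θ.permL = 1 := Equiv.ext fun l => by
    obtain ⟨r, hr⟩ := Q.exists_inc_point l
    exact fixL (by rw [hP1]; rfl) hr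
  rw [hP1, hL1]
  rfl

end Auto

end GenQuadrangle

/-- If a finite generalised quadrangle of order (s,t) has an automorphism of
prime order x with x > s+1 and x > t+1, then x divides the number of points
(s+1)(st+1). -/
theorem prime_order_auto_divides_card_points {P L : Type*} [Fintype P] [Fintype L]
    {s t x : ℕ} (Q : GenQuadrangle P L s t) (θ : Q.Auto)
    (hx : x.Prime) (hord : orderOf (θ.permP, θ.permL) = x)
    (hxs : s + 1 < x) (hxt : t + 1 < x) :
    x ∣ (s + 1) * (s * t + 1) := by
  have hθx : (θ.permP, θ.permL) ^ x = 1 := hord ▸ pow_orderOf_eq_one _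
  have hP : θ.permP ^ x = 1 := by simpa using congrArg Prod.fst hθx
  have hL : θ.permL ^ x = 1 := by simpa using congrArg Prod.snd hθx
  have hθ : (θ.permP, θ.permL) ≠ 1 := fun h => hx.one_lt.ne (by rw [← hord, h, orderOf_one])
  have := θ.nonempty_lines hθ
  have := Fact.mk hx
  rw [← Q.card_points, Nat.card_eq_fintype_card]
  by_contra hndvd
  obtain ⟨p, hp⟩ := Equiv.Perm.exists_fixed_point_of_prime (n := 1) hndvd (by rwa [pow_one])
  exact hθ (θ.eq_one_of_permP_apply_eq hx hP hL hxs hxt hp)
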